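/- Let (R_n) be a simple set of polynomials with dual basis (e_n), and let m ≥ 1. Let (e_n^{[m]}) be the dual basis of the normalized derivatives R_n^{[m]}(x) = (1/(n+1)_m) R_{n+m}^{(m)}(x). Then D^m(e_j^{[m]}) = (-1)^m (j+1)_m e_{j+m} for every j ≥ 0. -/

import Mathlib

open Polynomial Finset

/-- Distributional derivative of a moment functional: ⟨Dw, p⟩ = -⟨w, p'⟩. -/
noncomputable def fD (w : ℂ[X] →ₗ[ℂ] ℂ) : ℂ[X] →ₗ[ℂ] ℂ :=
  -(w ∘ₗ (derivative : ℂ[X] →ₗ[ℂ] ℂ[X]))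

/-- The monic-normalized m-th derivative `R_n^{[m]} = (1/(n+1)_m) R_{n+m}^{(m)}`. -/
noncomputable def normDeriv (R : ℕ → ℂ[X]) (m n : ℕ) : ℂ[X] :=
  (∏ i ∈ Finset.range m, ((n : ℂ) + 1 + i))⁻¹ • derivative^[m] (R (n + m))

/-!
Both sides are linear functionals, so it suffices to test them on the basis `R_n`.
There `⟨D^m w, R_n⟩ = (-1)^m ⟨w, R_n^{(m)}⟩`; the derivative vanishes for `n < m`, and for
`n = k + m` it is `(k+1)_m R_k^{[m]}`, on which `e_j^{[m]}` takes the value `(j+1)_m δ_{jk}`.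
-/

theorem Polynomial.span_range_eq_top_of_monic_natDegree_eq {A : Type*} [Ring A] [Nontrivial A]
    (P : ℕ → A[X]) (hmonic : ∀ n, (P n).Monic) (hdeg : ∀ n, (P n).natDegree = n) :
    Submodule.span A (Set.range P) = ⊤ :=
  let S : Sequence A :=
    ⟨P, fun n => by rw [degree_eq_natDegree (hmonic n).ne_zero, hdeg]⟩
  S.span fun n => by simp [S, (hmonic n).leadingCoeff]

theorem fD_iterate_apply (m : ℕ) (w : ℂ[X] →ₗ[ℂ] ℂ) (p : ℂ[X]) :
    fD^[m] w p = (-1 : ℂ) ^ m * w (derivative^[m] p) := by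
  induction m generalizing w p with
  | zero => simp
  | succ n ih =>
    rw [Function.iterate_succ_apply, Function.iterate_succ_apply', ih]
    simp only [fD, LinearMap.neg_apply, LinearMap.comp_apply, pow_succ]
    ring

theorem prod_natCast_add_one_add_ne_zero {K : Type*} [CommSemiring K] [NoZeroDivisors K]
    [CharZero K] (k m : ℕ) : ∏ i ∈ range m, ((k : K) + 1 + i) ≠ 0 :=
  prod_ne_zero_iff.mpr fun i _ => by norm_cast; omega

theorem iterate_derivative_eq_smul_normDeriv (R : ℕ → ℂ[X]) (m k : ℕ) :
    derivative^[m] (R (k + m)) = (∏ i ∈ range m, ((k : ℂ) + 1 + i)) • normDeriv R m k :=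
  (smul_inv_smul₀ (prod_natCast_add_one_add_ne_zero k m) _).symm

theorem apply_iterate_derivative_of_dual_normDeriv {R : ℕ → ℂ[X]} {m : ℕ}
    (hdeg : ∀ n, (R n).natDegree = n) {eM : ℕ → (ℂ[X] →ₗ[ℂ] ℂ)}
    (heM : ∀ i j, eM i (normDeriv R m j) = if i = j then 1 else 0) (j n : ℕ) :
    eM j (derivative^[m] (R n)) = if j + m = n then ∏ i ∈ range m, ((j : ℂ) + 1 + i) else 0 := by
  rcases lt_or_ge n m with hn | hn
  · rw [iterate_derivative_eq_zero (by rwa [hdeg]), map_zero, if_neg (by omega)]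
  · obtain ⟨k, rfl⟩ := Nat.exists_eq_add_of_le' hn
    rw [iterate_derivative_eq_smul_normDeriv, map_smul, heM, smul_eq_mul]
    simp_rw [add_left_inj]
    split_ifs with hjk
    · rw [hjk, mul_one]
    · rw [mul_zero]

theorem stmt5_general (R : ℕ → ℂ[X]) (m : ℕ)
    (hmonic : ∀ n, (R n).Monic) (hdeg : ∀ n, (R n).natDegree = n)
    (e eM : ℕ → (ℂ[X] →ₗ[ℂ] ℂ))
    (he : ∀ i j, e i (R j) = if i = j then 1 else 0)
    (heM : ∀ i j, eM i (normDeriv R m j) = if i = j then 1 else 0) :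
    ∀ j, fD^[m] (eM j) =
      ((-1 : ℂ) ^ m * ∏ i ∈ Finset.range m, ((j : ℂ) + 1 + i)) • e (j + m) := by
  intro j
  refine LinearMap.ext_on_range (span_range_eq_top_of_monic_natDegree_eq R hmonic hdeg) fun n => ?_
  rw [fD_iterate_apply, apply_iterate_derivative_of_dual_normDeriv hdeg heM, LinearMap.smul_apply,
    he, smul_eq_mul]
  split_ifs <;> ring

/-- `D^m(e_j^{[m]}) = (-1)^m (j+1)_m e_{j+m}`. -/
theorem stmt5 (R : ℕ → ℂ[X]) (m : ℕ) (hm : 1 ≤ m)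
    (hmonic : ∀ n, (R n).Monic) (hdeg : ∀ n, (R n).natDegree = n)
    (e eM : ℕ → (ℂ[X] →ₗ[ℂ] ℂ))
    (he : ∀ i j, e i (R j) = if i = j then 1 else 0)
    (heM : ∀ i j, eM i (normDeriv R m j) = if i = j then 1 else 0) :
    ∀ j, fD^[m] (eM j) =
      ((-1 : ℂ) ^ m * ∏ i ∈ Finset.range m, ((j : ℂ) + 1 + i)) • e (j + m) :=
  stmt5_general R m hmonic hdeg e eM he heM
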